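/- arXiv:2010.15027 — 2 statements merged into one kernel-verified Lean document; each statement's English description precedes it below -/
import Mathlib

section
/- Let A and B be n×n Hermitian matrices with B positive definite. Then there exists an invertible matrix E and a real diagonal matrix Λ such that A·E = B·E·Λ. -/
open Matrix
open scoped ComplexOrder

/-!
Factor `B = Lᴴ * L` with `L` invertible. Then `A x = λ B x` becomes the ordinary Hermitian
eigenproblem for `L⁻¹ᴴ * A * L⁻¹`, and if the unitary `U` diagonalizes that matrix,
`E = L⁻¹ * U` solves the generalized problem.
-/

namespace Matrix

variable {𝕜 n : Type*} [RCLike 𝕜] [Fintype n] [DecidableEq n]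

open scoped MatrixOrder in
theorem PosDef.exists_isUnit_eq_conjTranspose_mul_self {B : Matrix n n 𝕜} (hB : B.PosDef) :
    ∃ L : Matrix n n 𝕜, IsUnit L ∧ B = Lᴴ * L :=
  CStarAlgebra.isStrictlyPositive_iff_eq_star_mul_self.mp hB.isStrictlyPositive

theorem IsHermitian.mul_eigenvectorUnitary {A : Matrix n n 𝕜} (hA : A.IsHermitian) :
    A * (hA.eigenvectorUnitary : Matrix n n 𝕜) =
      (hA.eigenvectorUnitary : Matrix n n 𝕜) * diagonal (RCLike.ofReal ∘ hA.eigenvalues) := by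
  simpa [mul_assoc] using congrArg (· * (hA.eigenvectorUnitary : Matrix n n 𝕜)) hA.spectral_theorem

theorem IsHermitian.exists_isUnit_mul_eq_mul_mul_diagonal {A B : Matrix n n 𝕜}
    (hA : A.IsHermitian) (hB : B.PosDef) :
    ∃ (E : Matrix n n 𝕜) (d : n → ℝ), IsUnit E ∧ A * E = B * E * diagonal (RCLike.ofReal ∘ d) := by
  obtain ⟨L, hL, rfl⟩ := hB.exists_isUnit_eq_conjTranspose_mul_self
  have hLdet : IsUnit L.det := (isUnit_iff_isUnit_det L).mp hL
  have hC : (L⁻¹ᴴ * A * L⁻¹).IsHermitian := isHermitian_conjTranspose_mul_mul L⁻¹ hA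
  obtain ⟨U, d, hU, hCU⟩ : ∃ (U : Matrix n n 𝕜) (d : n → ℝ),
      IsUnit U ∧ L⁻¹ᴴ * A * L⁻¹ * U = U * diagonal (RCLike.ofReal ∘ d) :=
    ⟨_, _, Unitary.isUnit_coe .., hC.mul_eigenvectorUnitary⟩
  have hLL : Lᴴ * L⁻¹ᴴ = 1 := by
    rw [← conjTranspose_mul, nonsing_inv_mul L hLdet, conjTranspose_one]
  refine ⟨L⁻¹ * U, d, (isUnit_nonsing_inv_iff.mpr hL).mul hU, ?_⟩
  calc A * (L⁻¹ * U) = Lᴴ * (L⁻¹ᴴ * A * L⁻¹ * U) := by simp only [← mul_assoc, hLL, one_mul]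
    _ = Lᴴ * L * (L⁻¹ * U) * diagonal (RCLike.ofReal ∘ d) := by
      rw [hCU, mul_assoc Lᴴ L, mul_nonsing_inv_cancel_left L U hLdet, mul_assoc]

end Matrix

/-- Simultaneous diagonalization of a symmetric generalized eigenvalue problem:
for Hermitian `A` and positive definite `B`, there exist an invertible `E` and a
real diagonal `Λ` with `A * E = B * E * Λ`. -/
theorem symmetric_gep_diagonalization (n : ℕ)
    (A B : Matrix (Fin n) (Fin n) ℂ)
    (hA : A.IsHermitian) (hB : B.PosDef) :
    ∃ E Λ : Matrix (Fin n) (Fin n) ℂ,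
      IsUnit E ∧ Λ.IsDiag ∧ (∀ i, (Λ i i).im = 0) ∧ A * E = B * E * Λ := by
  obtain ⟨E, d, hE, hAE⟩ := hA.exists_isUnit_mul_eq_mul_mul_diagonal hB
  exact ⟨E, _, hE, isDiag_diagonal _, fun i => by simp, hAE⟩
end

section
/- Let M be a block matrix whose rows include (as a submatrix) M' = (I₀ᵀ F ⊗ I) N, where F is a p×p unitary, I₀ is the p×(p−1) matrix formed by the last p−1 columns of the identity, and N is any np×np matrix. Suppose F maps |0⟩ to the uniform superposition |e⟩ = (1/√p)(1,…,1)ᵀ. If N has a right singular vector of the form |0⟩⊗|x⟩ with singular value ‖N‖ and left singular vector |0⟩⊗|y⟩, then ‖M'‖ ≥ √((p−1)/p)·‖N‖. -/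
open Matrix
open scoped Kronecker

/-!
Test `M'` on the unit vector `v = |0⟩ ⊗ x`. Since `N v = ‖N‖ (|0⟩ ⊗ y)` and the Kronecker product
acts factorwise on product vectors, `M' v = ‖N‖ (I₀ᵀ F |0⟩) ⊗ y = ‖N‖ (I₀ᵀ |e⟩) ⊗ y`.
Deleting one of the `p` equal coordinates `1/√p` of `|e⟩` leaves a vector of norm `√((p-1)/p)`,
so `‖M'‖ ≥ ‖M' v‖ = √((p-1)/p) ‖N‖`.
-/

/-- The ℓ²-operator (spectral) norm of a matrix. -/
noncomputable def opNorm {m n : Type*} [Fintype m] [Fintype n] [DecidableEq n]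
    (M : Matrix m n ℂ) : ℝ :=
  ‖LinearMap.toContinuousLinearMap (Matrix.toEuclideanLin M)‖

namespace Matrix

variable {R ι κ l m : Type*}

def kroneckerVec [Mul R] (u : ι → R) (w : κ → R) : ι × κ → R :=
  fun q => u q.1 * w q.2

theorem kronecker_mulVec_kroneckerVec [CommSemiring R] [Fintype ι] [Fintype κ]
    (A : Matrix l ι R) (B : Matrix m κ R) (u : ι → R) (w : κ → R) :
    (A ⊗ₖ B) *ᵥ kroneckerVec u w = kroneckerVec (A *ᵥ u) (B *ᵥ w) := by
  ext ⟨i, j⟩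
  simp only [kroneckerVec, mulVec, dotProduct, kroneckerMap_apply, Fintype.sum_prod_type,
    Finset.sum_mul_sum, mul_mul_mul_comm]

theorem kroneckerVec_single [MulZeroClass R] [DecidableEq ι] (i : ι) (a : R) (w : κ → R) :
    kroneckerVec (Pi.single i a) w = fun q => if q.1 = i then a * w q.2 else 0 := by
  ext ⟨j, k⟩
  by_cases h : j = i <;> simp [kroneckerVec, h]

theorem norm_toLp_kroneckerVec {𝕜 : Type*} [RCLike 𝕜] [Fintype ι] [Fintype κ]
    (u : ι → 𝕜) (w : κ → 𝕜) :
    ‖WithLp.toLp 2 (kroneckerVec u w)‖ = ‖WithLp.toLp 2 u‖ * ‖WithLp.toLp 2 w‖ := by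
  simp only [EuclideanSpace.norm_eq, ← Real.sqrt_mul (Finset.sum_nonneg fun _ _ => sq_nonneg _),
    Finset.sum_mul_sum, ← Finset.univ_product_univ, Finset.sum_product]
  simp [kroneckerVec, mul_pow]

theorem norm_toLp_const_two {𝕜 : Type*} [RCLike 𝕜] [Fintype ι] (a : 𝕜) :
    ‖WithLp.toLp 2 (fun _ : ι => a)‖ = √(Fintype.card ι) * ‖a‖ := by
  rw [EuclideanSpace.norm_eq]
  dsimp only
  rw [Finset.sum_const, Finset.card_univ, nsmul_eq_mul,
    Real.sqrt_mul (Nat.cast_nonneg _), Real.sqrt_sq (norm_nonneg _)]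

theorem dropFirst_mulVec [NonAssocSemiring R] {k p : ℕ} (hkp : k + 1 ≤ p) (u : Fin p → R) :
    (of fun (i : Fin k) (j : Fin p) => if (j : ℕ) = (i : ℕ) + 1 then (1 : R) else 0) *ᵥ u =
      fun i : Fin k => u ⟨i + 1, by omega⟩ := by
  ext i
  have h : ∀ j : Fin p, (j : ℕ) = i + 1 ↔ j = ⟨i + 1, by omega⟩ := fun j => by rw [Fin.ext_iff]
  simp only [mulVec, dotProduct, of_apply, h, ite_mul, one_mul, zero_mul, Finset.sum_ite_eq',
    Finset.mem_univ, if_true]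

end Matrix

theorem norm_mulVec_le_opNorm {m n : Type*} [Fintype m] [Fintype n] [DecidableEq n]
    (M : Matrix m n ℂ) (v : n → ℂ) :
    ‖WithLp.toLp 2 (M *ᵥ v)‖ ≤ opNorm M * ‖WithLp.toLp 2 v‖ :=
  (LinearMap.toContinuousLinearMap (Matrix.toEuclideanLin M)).le_opNorm (WithLp.toLp 2 v)

/-- Lower bound on the norm of the submatrix `M' = (I₀ᵀ F ⊗ I) N`: if `F` is a `p × p`
unitary mapping `|0⟩` to the uniform superposition, `I₀ᵀ` deletes the first coordinate,
and `N` attains its norm on a right singular vector of the form `|0⟩ ⊗ x` with left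
singular vector `|0⟩ ⊗ y`, then `‖M'‖ ≥ √((p-1)/p) ‖N‖`. -/
theorem submatrix_norm_lower_bound (p n : ℕ) (hp : 2 ≤ p)
    (F : Matrix (Fin p) (Fin p) ℂ)
    (hF0 : F.mulVec (Pi.single (⟨0, by omega⟩ : Fin p) 1)
      = fun _ => ((1 / Real.sqrt p : ℝ) : ℂ))
    (N : Matrix ((Fin p) × (Fin n)) ((Fin p) × (Fin n)) ℂ)
    (x y : EuclideanSpace ℂ (Fin n)) (hx : ‖x‖ = 1) (hy : ‖y‖ = 1)
    (hsing : N.mulVec (fun q => if (q.1 : ℕ) = 0 then x q.2 else 0)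
      = fun q => if (q.1 : ℕ) = 0 then ((opNorm N : ℝ) : ℂ) * y q.2 else 0) :
    Real.sqrt (((p : ℝ) - 1) / p) * opNorm N ≤
      opNorm
        ((((Matrix.of fun (i : Fin (p - 1)) (j : Fin p) =>
            if (j : ℕ) = (i : ℕ) + 1 then (1 : ℂ) else 0) * F) ⊗ₖ
          (1 : Matrix (Fin n) (Fin n) ℂ)) * N) := by
  set c := opNorm N
  set e₀ : Fin p := ⟨0, by omega⟩
  have hzero (q : Fin p × Fin n) : (q.1 : ℕ) = 0 ↔ q.1 = e₀ := by rw [Fin.ext_iff]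
  have hNv : N *ᵥ kroneckerVec (Pi.single e₀ 1) x = kroneckerVec (Pi.single e₀ (c : ℂ)) y := by
    simpa only [kroneckerVec_single, one_mul, hzero] using hsing
  have hFc : F *ᵥ Pi.single e₀ (c : ℂ) = fun _ => ((c / √p : ℝ) : ℂ) := by
    rw [← mul_one (c : ℂ), ← smul_eq_mul, Pi.single_smul', mulVec_smul, hF0]
    ext; simp [div_eq_mul_inv]
  have hMv : ((((of fun (i : Fin (p - 1)) (j : Fin p) =>
      if (j : ℕ) = (i : ℕ) + 1 then (1 : ℂ) else 0) * F) ⊗ₖ (1 : Matrix (Fin n) (Fin n) ℂ)) * N)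
        *ᵥ kroneckerVec (Pi.single e₀ 1) x = kroneckerVec (fun _ => ((c / √p : ℝ) : ℂ)) y := by
    rw [← mulVec_mulVec, hNv, kronecker_mulVec_kroneckerVec, ← mulVec_mulVec, hFc,
      dropFirst_mulVec (by omega), one_mulVec]
  have hc : 0 ≤ c := norm_nonneg _
  calc √(((p : ℝ) - 1) / p) * c
      = ‖WithLp.toLp 2 (kroneckerVec (fun _ : Fin (p - 1) => ((c / √p : ℝ) : ℂ)) y)‖ := by
        rw [norm_toLp_kroneckerVec, norm_toLp_const_two, WithLp.toLp_ofLp, hy, Fintype.card_fin,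
          Complex.norm_real, Real.norm_of_nonneg (by positivity), Nat.cast_sub (by omega),
          Nat.cast_one, Real.sqrt_div' _ (Nat.cast_nonneg p)]
        ring
    _ ≤ _ * ‖WithLp.toLp 2 (kroneckerVec (Pi.single e₀ 1) x)‖ := hMv ▸ norm_mulVec_le_opNorm _ _
    _ = _ := by
      rw [norm_toLp_kroneckerVec, WithLp.toLp_ofLp, hx, PiLp.toLp_single, PiLp.norm_single,
        norm_one, mul_one, mul_one]
end
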